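/- Let n ≥ 2 and let G, R : ℝ → ℝ be C^∞ functions; set g(x) = ∫₀ˣ s·G'(s) ds and H(x) = x·G(x) − g(x). Write points of ℝ^{2n+1} as (q,p,τ) with q ∈ ℝⁿ, p ∈ ℝⁿ, τ ∈ ℝ, and let α be the standard contact form α_{(q,p,τ)}(v) = Σ_{i=1}^{n} p_i v_{q_i} − v_τ. For t ∈ ℝ define Φ_t : ℝ^{2n+1} → ℝ^{2n+1} by Φ_t(q,p,τ) = (q₁,…,q_{n-1}, q_n + t·R(q_{n-1})·G(p_n); p₁,…,p_{n-2}, p_{n-1} − t·R'(q_{n-1})·H(p_n), p_n; τ + t·R(q_{n-1})·g(p_n)). Then: (i) t ↦ Φ_t is the flow of the vector field X(q,p,τ) = R(q_{n-1})G(p_n)·∂_{q_n} − R'(q_{n-1})H(p_n)·∂_{p_{n-1}} + R(q_{n-1})g(p_n)·∂_τ, i.e. Φ_0 = id and (d/dt)Φ_t(z) = X(Φ_t(z)); and (ii) Φ_t preserves α exactly: α_{Φ_t(z)}(DΦ_t(z)v) = α_z(v) for all z, v and all t, so each Φ_t is a strict contactomorphism of (ℝ^{2n+1}, ker α). (This is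 the compactly cut-off contact flow obtained from the contact Hamiltonian R(q_{n-1})·H(p_n), which is used to slide a Legendrian along the Whitney bridge with compact support.) -/

import Mathlib

open Set Function

/-- The 1-jet space `ℝⁿ_q × ℝⁿ_p × ℝ_τ` (here with `n = m + 2`). -/
abbrev JetSp2 (m : ℕ) : Type :=
  (Fin (m + 2) → ℝ) × (Fin (m + 2) → ℝ) × ℝ

/-- The standard contact form `α_{(q,p,τ)} = Σ pᵢ dqᵢ − dτ` on the 1-jet space. -/
noncomputable def stdJetForm2 (m : ℕ) (z : JetSp2 m) : JetSp2 m →L[ℝ] ℝ :=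
  (∑ i : Fin (m + 2), z.2.1 i •
      (ContinuousLinearMap.proj i).comp
        (ContinuousLinearMap.fst ℝ (Fin (m + 2) → ℝ) ((Fin (m + 2) → ℝ) × ℝ)))
    - (ContinuousLinearMap.snd ℝ (Fin (m + 2) → ℝ) ℝ).comp
        (ContinuousLinearMap.snd ℝ (Fin (m + 2) → ℝ) ((Fin (m + 2) → ℝ) × ℝ))

lemma stdJetForm2_apply (m : ℕ) (z v : JetSp2 m) :
    stdJetForm2 m z v = (∑ i : Fin (m + 2), z.2.1 i * v.1 i) - v.2.2 := by
  simp [stdJetForm2]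

lemma sum_single {k : ℕ} (j : Fin k) (c : ℝ) :
    ∑ i : Fin k, (Pi.single j c : Fin k → ℝ) i = c := by
  simp [Pi.single_apply, Finset.sum_ite_eq]

lemma sgl_apply {k : ℕ} (i : Fin k) (c : ℝ) :
    (ContinuousLinearMap.pi (Pi.single i (ContinuousLinearMap.id ℝ ℝ))) c = (Pi.single i c : Fin k → ℝ) := by
  funext j
  by_cases h : j = i <;>
    simp [ContinuousLinearMap.pi_apply, Pi.single_apply, h]

/-- for `n = m + 2 ≥ 2`, smooth `G, R : ℝ → ℝ`, `g x = ∫₀ˣ s G'(s) ds`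
and `H x = x G x − g x`, the cut-off maps
`Φ_t(q,p,τ) = (qₙ ↦ qₙ + t R(q_{n-1}) G(pₙ); p_{n-1} ↦ p_{n-1} − t R'(q_{n-1}) H(pₙ);
τ ↦ τ + t R(q_{n-1}) g(pₙ))` are: (i) the flow of the contact vector field
`X = R(q_{n-1})G(pₙ)∂_{qₙ} − R'(q_{n-1})H(pₙ)∂_{p_{n-1}} + R(q_{n-1})g(pₙ)∂_τ`,
and (ii) each `Φ_t` preserves the standard 1-jet contact form exactly, so each `Φ_t`
is a strict contactomorphism. Here `qₙ` is the coordinate `Fin.last (m+1)` and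
`q_{n-1}` is `(Fin.last m).castSucc`. -/
theorem cutoff_jet_shift_is_strict_contact_flow (n m : ℕ) (hn : 2 ≤ n) (hnm : n = m + 2)
    (G R : ℝ → ℝ) (hG : ContDiff ℝ (⊤ : ℕ∞) G) (hR : ContDiff ℝ (⊤ : ℕ∞) R)
    (g : ℝ → ℝ) (hg : ∀ x, g x = ∫ s in (0:ℝ)..x, s * deriv G s)
    (H : ℝ → ℝ) (hH : ∀ x, H x = x * G x - g x)
    (Φ : ℝ → JetSp2 m → JetSp2 m)
    (hΦ : ∀ t q p τ, Φ t (q, p, τ) =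
      (Function.update q (Fin.last (m + 1))
          (q (Fin.last (m + 1)) + t * R (q (Fin.last m).castSucc) * G (p (Fin.last (m + 1)))),
        Function.update p (Fin.last m).castSucc
          (p (Fin.last m).castSucc
            - t * deriv R (q (Fin.last m).castSucc) * H (p (Fin.last (m + 1)))),
        τ + t * R (q (Fin.last m).castSucc) * g (p (Fin.last (m + 1)))))
    (X : JetSp2 m → JetSp2 m)
    (hX : ∀ q p τ, X (q, p, τ) =
      (Pi.single (Fin.last (m + 1)) (R (q (Fin.last m).castSucc) * G (p (Fin.last (m + 1)))),
        Pi.single (Fin.last m).castSucc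
          (-(deriv R (q (Fin.last m).castSucc) * H (p (Fin.last (m + 1))))),
        R (q (Fin.last m).castSucc) * g (p (Fin.last (m + 1))))) :
    -- (i) `Φ` is the flow of the vector field `X`
    (Φ 0 = id) ∧
    (∀ z t, HasDerivAt (fun s => Φ s z) (X (Φ t z)) t) ∧
    -- (ii) each `Φ_t` is a strict contactomorphism
    (∀ t, ContDiff ℝ (⊤ : ℕ∞) (Φ t)) ∧
    (∀ t, Function.Bijective (Φ t)) ∧
    (∀ t z v, stdJetForm2 m (Φ t z) (fderiv ℝ (Φ t) z v) = stdJetForm2 m z v) := by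
  set i₁ : Fin (m + 2) := (Fin.last m).castSucc with hi₁def
  set i₂ : Fin (m + 2) := Fin.last (m + 1) with hi₂def
  have hne : i₁ ≠ i₂ := (Fin.castSucc_lt_last (Fin.last m)).ne
  -- smoothness of g, H
  have hG' : ContDiff ℝ (⊤ : ℕ∞) (deriv G) := (contDiff_infty_iff_deriv.mp hG).2
  have hR' : ContDiff ℝ (⊤ : ℕ∞) (deriv R) := (contDiff_infty_iff_deriv.mp hR).2
  have hfc : ContDiff ℝ (⊤ : ℕ∞) (fun s : ℝ => s * deriv G s) := contDiff_id.mul hG'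
  have hgfun : g = fun u : ℝ => ∫ s in (0:ℝ)..u, s * deriv G s := funext hg
  have hgud : ∀ x : ℝ, HasDerivAt g (x * deriv G x) x := by
    intro x
    have h : HasDerivAt (fun u : ℝ => ∫ s in (0:ℝ)..u, s * deriv G s) (x * deriv G x) x :=
      intervalIntegral.integral_hasDerivAt_right
        (hfc.continuous.intervalIntegrable _ _)
        (hfc.continuous.stronglyMeasurableAtFilter _ _) hfc.continuous.continuousAt
    rw [hgfun]; exact h
  have hgc : ContDiff ℝ (⊤ : ℕ∞) g := by
    have hdg : deriv g = fun x => x * deriv G x := funext fun x => (hgud x).deriv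
    exact contDiff_infty_iff_deriv.mpr ⟨fun x => (hgud x).differentiableAt, hdg ▸ hfc⟩
  have hHfun : H = fun x => x * G x - g x := funext hH
  have hHc : ContDiff ℝ (⊤ : ℕ∞) H := by rw [hHfun]; exact (contDiff_id.mul hG).sub hgc
  -- key structural identities
  have hA : ∀ t z, Φ t z = z + t • X z := by
    rintro t ⟨q, p, τ⟩
    rw [hΦ, hX]
    refine Prod.ext ?_ (Prod.ext ?_ ?_)
    · funext j
      simp only [Prod.fst_add, Prod.smul_fst, Pi.add_apply, Pi.smul_apply, smul_eq_mul,
        Function.update_apply, Pi.single_apply]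
      by_cases h : j = i₂ <;> simp [h] <;> ring
    · funext j
      simp only [Prod.snd_add, Prod.smul_snd, Prod.fst_add, Prod.smul_fst, Pi.add_apply,
        Pi.smul_apply, smul_eq_mul, Function.update_apply, Pi.single_apply]
      by_cases h : j = i₁ <;> simp [h] <;> ring
    · simp only [Prod.snd_add, Prod.smul_snd, smul_eq_mul]; ring
  have hB : ∀ t z, X (Φ t z) = X z := by
    rintro t ⟨q, p, τ⟩
    rw [hΦ, hX, hX]
    rw [Function.update_of_ne hne, Function.update_of_ne hne.symm]
  -- CLM projections
  set π₁ : JetSp2 m →L[ℝ] ℝ :=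
    (ContinuousLinearMap.proj i₁).comp
      (ContinuousLinearMap.fst ℝ (Fin (m + 2) → ℝ) ((Fin (m + 2) → ℝ) × ℝ)) with hπ₁def
  set π₂ : JetSp2 m →L[ℝ] ℝ :=
    ((ContinuousLinearMap.proj i₂).comp (ContinuousLinearMap.fst ℝ (Fin (m + 2) → ℝ) ℝ)).comp
      (ContinuousLinearMap.snd ℝ (Fin (m + 2) → ℝ) ((Fin (m + 2) → ℝ) × ℝ)) with hπ₂def
  have hπ₁ : ∀ z : JetSp2 m, π₁ z = z.1 i₁ := fun z => rfl
  have hπ₂ : ∀ z : JetSp2 m, π₂ z = z.2.1 i₂ := fun z => rfl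
  set sgl : Fin (m + 2) → (ℝ →L[ℝ] (Fin (m + 2) → ℝ)) :=
    fun i => ContinuousLinearMap.pi (Pi.single i (ContinuousLinearMap.id ℝ ℝ)) with hsgldef
  have hXfun : X = fun z : JetSp2 m =>
      ((sgl i₂) (R (π₁ z) * G (π₂ z)),
       (sgl i₁) (-(deriv R (π₁ z) * H (π₂ z))),
       R (π₁ z) * g (π₂ z)) := by
    funext z
    obtain ⟨q, p, τ⟩ := z
    rw [hX]
    simp only [hπ₁, hπ₂, hsgldef, sgl_apply]
  have hXc : ContDiff ℝ (⊤ : ℕ∞) X := by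
    rw [hXfun]
    exact (((sgl i₂).contDiff).comp ((hR.comp π₁.contDiff).mul (hG.comp π₂.contDiff))).prodMk
      ((((sgl i₁).contDiff).comp
        (((hR'.comp π₁.contDiff).mul (hHc.comp π₂.contDiff)).neg)).prodMk
        ((hR.comp π₁.contDiff).mul (hgc.comp π₂.contDiff)))
  have hΦfun : ∀ t, Φ t = fun z => z + t • X z := fun t => funext fun z => hA t z
  refine ⟨?_, ?_, ?_, ?_, ?_⟩
  · funext z; rw [hA]; simp
  · intro z t
    rw [hB]
    have : (fun s => Φ s z) = fun s => z + s • X z := funext fun s => hA s z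
    rw [this]
    simpa using ((hasDerivAt_id t).smul_const (X z)).const_add z
  · intro t
    rw [hΦfun t]
    exact contDiff_id.add (hXc.const_smul t)
  · intro t
    refine Function.bijective_iff_has_inverse.mpr ⟨Φ (-t), fun z => ?_, fun z => ?_⟩
    · rw [hA (-t), hB, hA t, neg_smul, add_neg_cancel_right]
    · rw [hA t, hB, hA (-t), neg_smul, neg_add_cancel_right]
  · intro t z v
    obtain ⟨q, p, τ⟩ := z
    obtain ⟨u, w, s⟩ := v
    -- scalar derivatives
    have hRat : HasFDerivAt (fun y : JetSp2 m => R (π₁ y))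
        (deriv R (π₁ (q, p, τ)) • π₁) (q, p, τ) :=
      (((hR.differentiable (by simp)) (π₁ (q, p, τ))).hasDerivAt).comp_hasFDerivAt _
        π₁.hasFDerivAt
    have hR'at : HasFDerivAt (fun y : JetSp2 m => deriv R (π₁ y))
        (deriv (deriv R) (π₁ (q, p, τ)) • π₁) (q, p, τ) :=
      (((hR'.differentiable (by simp)) (π₁ (q, p, τ))).hasDerivAt).comp_hasFDerivAt _
        π₁.hasFDerivAt
    have hGat : HasFDerivAt (fun y : JetSp2 m => G (π₂ y))
        (deriv G (π₂ (q, p, τ)) • π₂) (q, p, τ) :=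
      (((hG.differentiable (by simp)) (π₂ (q, p, τ))).hasDerivAt).comp_hasFDerivAt _
        π₂.hasFDerivAt
    have hHat : HasFDerivAt (fun y : JetSp2 m => H (π₂ y))
        (deriv H (π₂ (q, p, τ)) • π₂) (q, p, τ) :=
      (((hHc.differentiable (by simp)) (π₂ (q, p, τ))).hasDerivAt).comp_hasFDerivAt _
        π₂.hasFDerivAt
    have hgat : HasFDerivAt (fun y : JetSp2 m => g (π₂ y))
        ((π₂ (q, p, τ) * deriv G (π₂ (q, p, τ))) • π₂) (q, p, τ) :=
      (hgud (π₂ (q, p, τ))).comp_hasFDerivAt _ π₂.hasFDerivAt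
    have hf₁ := hRat.mul hGat
    have hf₂ := (hR'at.mul hHat).neg
    have hf₃ := hRat.mul hgat
    set D₁ := R (π₁ (q, p, τ)) • (deriv G (π₂ (q, p, τ)) • π₂) +
        G (π₂ (q, p, τ)) • (deriv R (π₁ (q, p, τ)) • π₁) with hD₁def
    set D₂ := -(deriv R (π₁ (q, p, τ)) • (deriv H (π₂ (q, p, τ)) • π₂) +
        H (π₂ (q, p, τ)) • (deriv (deriv R) (π₁ (q, p, τ)) • π₁)) with hD₂def
    set D₃ := R (π₁ (q, p, τ)) • ((π₂ (q, p, τ) * deriv G (π₂ (q, p, τ))) • π₂) +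
        g (π₂ (q, p, τ)) • (deriv R (π₁ (q, p, τ)) • π₁) with hD₃def
    set DX := ((sgl i₂).comp D₁).prod (((sgl i₁).comp D₂).prod D₃) with hDXdef
    have hXd : HasFDerivAt X DX (q, p, τ) := by
      rw [hXfun]
      exact ((sgl i₂).hasFDerivAt.comp _ hf₁).prodMk
        (((sgl i₁).hasFDerivAt.comp _ hf₂).prodMk hf₃)
    have hΦd : HasFDerivAt (Φ t)
        (ContinuousLinearMap.id ℝ (JetSp2 m) + t • DX) (q, p, τ) := by
      rw [hΦfun t]
      exact (hasFDerivAt_id _).add (hXd.const_smul t)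
    rw [hΦd.fderiv]
    -- abbreviations for the point
    have hπ₁v : π₁ (q, p, τ) = q i₁ := rfl
    have hπ₂v : π₂ (q, p, τ) = p i₂ := rfl
    set A := R (q i₁) * (deriv G (p i₂) * w i₂) + G (p i₂) * (deriv R (q i₁) * u i₁) with hAdef
    set C := R (q i₁) * (p i₂ * deriv G (p i₂) * w i₂) + g (p i₂) * (deriv R (q i₁) * u i₁)
      with hCdef
    have hDXv : DX (u, w, s) =
        ((Pi.single i₂ A : Fin (m+2) → ℝ), (Pi.single i₁ (D₂ (u, w, s)) : Fin (m+2) → ℝ), C) := by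
      rw [hDXdef]
      refine Prod.ext ?_ (Prod.ext ?_ ?_)
      · show sgl i₂ (D₁ (u, w, s)) = _
        rw [hsgldef, sgl_apply]
        congr 1
      · show sgl i₁ (D₂ (u, w, s)) = _
        rw [hsgldef, sgl_apply]
      · show D₃ (u, w, s) = C
        rfl
    have happ : (ContinuousLinearMap.id ℝ (JetSp2 m) + t • DX) (u, w, s)
        = (u, w, s) + t • DX (u, w, s) := by
      simp [ContinuousLinearMap.add_apply, ContinuousLinearMap.smul_apply]
    rw [happ, hDXv, hΦ, stdJetForm2_apply, stdJetForm2_apply]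
    simp only [Prod.fst_add, Prod.snd_add, Prod.smul_fst, Prod.smul_snd, smul_eq_mul]
    set E := -(t * deriv R (q i₁) * H (p i₂)) with hEdef
    have hterm : ∀ i : Fin (m + 2),
        Function.update p i₁ (p i₁ - t * deriv R (q i₁) * H (p i₂)) i *
          (u + t • (Pi.single i₂ A : Fin (m + 2) → ℝ)) i
        = p i * u i + ((Pi.single i₂ (t * p i₂ * A) : Fin (m + 2) → ℝ) i +
            (Pi.single i₁ (E * u i₁) : Fin (m + 2) → ℝ) i) := by
      intro i
      simp only [Pi.add_apply, Pi.smul_apply, Pi.single_apply, Function.update_apply,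
        smul_eq_mul, hEdef]
      rcases eq_or_ne i i₁ with h1 | h1
      · subst h1
        simp only [if_true, eq_self_iff_true, if_neg hne]
        ring
      · rcases eq_or_ne i i₂ with h2 | h2
        · subst h2
          simp only [if_true, eq_self_iff_true, if_neg h1]
          ring
        · simp only [if_neg h1, if_neg h2]
          ring
    have hsum : (∑ i : Fin (m + 2),
          Function.update p i₁ (p i₁ - t * deriv R (q i₁) * H (p i₂)) i *
            (u + t • (Pi.single i₂ A : Fin (m + 2) → ℝ)) i)
        = (∑ i : Fin (m + 2), p i * u i) + (t * p i₂ * A + E * u i₁) := by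
      rw [Finset.sum_congr rfl (fun i _ => hterm i), Finset.sum_add_distrib,
        Finset.sum_add_distrib, sum_single, sum_single]
    rw [hsum]
    rw [hAdef, hCdef, hEdef, hH]
    ring
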